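/- arXiv:1610.07026 — 4 statements merged into one kernel-verified Lean document; each statement's English description precedes it below -/
import Mathlib

section
/- Let I be an ideal on a time scale T, and let f, g : T → ℝ be Δ-measurable functions. If f is I-convergent to L and g is I-convergent to M, then the product fg is I-convergent to LM. -/
open MeasureTheory Filter Set Bornology

def IdealOn (T : Set ℝ) (I : Set (Set ℝ)) : Prop :=
  (∀ A ∈ I, A ⊆ T) ∧ (∅ ∈ I) ∧ (∀ A ∈ I, ∀ B ∈ I, A ∪ B ∈ I) ∧
    (∀ A ∈ I, ∀ B, B ⊆ A → B ∈ I)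

def IConv (T : Set ℝ) (I : Set (Set ℝ)) (f : ℝ → ℝ) (L : ℝ) : Prop :=
  ∀ ε : ℝ, 0 < ε → {t | t ∈ T ∧ ε ≤ |f t - L|} ∈ I

def AssocFilter (T : Set ℝ) (I : Set (Set ℝ)) : Set (Set ℝ) :=
  {M | M ⊆ T ∧ T \ M ∈ I}

def IStarConv (T : Set ℝ) (I : Set (Set ℝ)) (f : ℝ → ℝ) (L : ℝ) : Prop :=
  ∃ Ω ∈ AssocFilter T I, ∀ ε : ℝ, 0 < ε → ∃ t' ∈ T, ∀ t ∈ Ω, t' ≤ t → |f t - L| < ε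

def BAdmissible (T : Set ℝ) (I : Set (Set ℝ)) : Prop :=
  ∀ A, A ⊆ T → IsBounded A → A ∈ I

def DensityZero (T : Set ℝ) (μ : Measure ℝ) (A : Set ℝ) : Prop :=
  Tendsto (fun t => μ (A ∩ Icc (sInf T) t) / μ (T ∩ Icc (sInf T) t)) atTop (nhds 0)


/-- Products of `I`-convergent functions are `I`-convergent to the product of the limits. -/
theorem IConv_mul (T : Set ℝ) (I : Set (Set ℝ)) (hI : IdealOn T I)
    (f g : ℝ → ℝ) (hf : Measurable f) (hg : Measurable g) (L M : ℝ)
    (hL : IConv T I f L) (hM : IConv T I g M) :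
    IConv T I (fun t => f t * g t) (L * M) := by
  intro ε hε
  obtain ⟨-, -, hunion, hsub⟩ := hI
  set δ : ℝ := min 1 (ε / (1 + |L| + |M|)) with hδdef
  have hden : (0:ℝ) < 1 + |L| + |M| := by positivity
  have hδpos : 0 < δ := lt_min one_pos (div_pos hε hden)
  have hδ1 : δ ≤ 1 := min_le_left _ _
  have hδ2 : δ * (1 + |L| + |M|) ≤ ε := by
    have := min_le_right 1 (ε / (1 + |L| + |M|))
    calc δ * (1 + |L| + |M|) ≤ (ε / (1 + |L| + |M|)) * (1 + |L| + |M|) := by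
          apply mul_le_mul_of_nonneg_right this (le_of_lt hden)
      _ = ε := by field_simp
  have hA := hL δ hδpos
  have hB := hM δ hδpos
  have hAB := hunion _ hA _ hB
  apply hsub _ hAB
  intro t ht
  obtain ⟨htT, hbad⟩ := ht
  by_contra hcontra
  simp only [mem_union, mem_setOf_eq, not_or, not_and, not_le] at hcontra
  have h1 : |f t - L| < δ := hcontra.1 htT
  have h2 : |g t - M| < δ := hcontra.2 htT
  have key : f t * g t - L * M = (f t - L) * (g t - M) + (f t - L) * M + L * (g t - M) := by
    ring
  have hbound : |f t * g t - L * M| < ε := by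
    calc |f t * g t - L * M|
        ≤ |f t - L| * |g t - M| + |f t - L| * |M| + |L| * |g t - M| := by
          rw [key]
          calc |(f t - L) * (g t - M) + (f t - L) * M + L * (g t - M)|
              ≤ |(f t - L) * (g t - M) + (f t - L) * M| + |L * (g t - M)| := abs_add_le _ _
            _ ≤ |(f t - L) * (g t - M)| + |(f t - L) * M| + |L * (g t - M)| := by
                gcongr; exact abs_add_le _ _
            _ = |f t - L| * |g t - M| + |f t - L| * |M| + |L| * |g t - M| := by
                rw [abs_mul, abs_mul, abs_mul]
      _ < δ * 1 + δ * |M| + |L| * δ := by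
          have h1' : |f t - L| * |g t - M| < δ * 1 := by
            calc |f t - L| * |g t - M| ≤ |f t - L| * δ := by
                  exact mul_le_mul_of_nonneg_left h2.le (abs_nonneg _)
              _ < δ * 1 := by
                  rw [mul_one]
                  calc |f t - L| * δ < δ * δ := by
                        exact mul_lt_mul_of_pos_right h1 hδpos
                    _ ≤ 1 * δ := by exact mul_le_mul_of_nonneg_right hδ1 hδpos.le
                    _ = δ := one_mul δ
          have h2' : |f t - L| * |M| ≤ δ * |M| :=
            mul_le_mul_of_nonneg_right h1.le (abs_nonneg M)
          have h3' : |L| * |g t - M| ≤ |L| * δ :=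
            mul_le_mul_of_nonneg_left h2.le (abs_nonneg L)
          exact add_lt_add_of_lt_of_le (add_lt_add_of_lt_of_le h1' h2') h3'
      _ = δ * (1 + |L| + |M|) := by ring
      _ ≤ ε := hδ2
  exact absurd hbad (not_le.mpr hbound)
end

section
/- Let I be a nontrivial ideal on a time scale T with sup T = ∞, and let f, g, h : T → ℝ be Δ-measurable functions with f(t) ≤ g(t) ≤ h(t) for all t ∈ T. If f and h are both I*-convergent to the same limit L, then g is I*-convergent to L. -/
open MeasureTheory Filter Set Bornology

/-- Squeeze theorem for `I*`-convergence. -/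
theorem IStarConv_squeeze (T : Set ℝ) (I : Set (Set ℝ))
    (hI : IdealOn T I) (hnt : T ∉ I) (hub : ¬ BddAbove T)
    (f g h : ℝ → ℝ) (hf : Measurable f) (hg : Measurable g) (hh : Measurable h)
    (hfg : ∀ t ∈ T, f t ≤ g t) (hgh : ∀ t ∈ T, g t ≤ h t) (L : ℝ)
    (h1 : IStarConv T I f L) (h2 : IStarConv T I h L) :
    IStarConv T I g L := by
  obtain ⟨Ω₁, ⟨hΩ₁T, hΩ₁⟩, H1⟩ := h1
  obtain ⟨Ω₂, ⟨hΩ₂T, hΩ₂⟩, H2⟩ := h2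
  refine ⟨Ω₁ ∩ Ω₂, ⟨fun x hx => hΩ₁T hx.1, ?_⟩, ?_⟩
  · have : T \ (Ω₁ ∩ Ω₂) = (T \ Ω₁) ∪ (T \ Ω₂) := by
      ext x; simp [and_or_left]; tauto
    rw [this]
    exact hI.2.2.1 _ hΩ₁ _ hΩ₂
  · intro ε hε
    obtain ⟨t₁, ht₁T, ht₁⟩ := H1 ε hε
    obtain ⟨t₂, ht₂T, ht₂⟩ := H2 ε hε
    refine ⟨max t₁ t₂, ?_, ?_⟩
    · rcases le_total t₁ t₂ with hle | hle
      · rwa [max_eq_right hle]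
      · rwa [max_eq_left hle]
    · intro t ht hmax
      have h1' := ht₁ t ht.1 (le_trans (le_max_left _ _) hmax)
      have h2' := ht₂ t ht.2 (le_trans (le_max_right _ _) hmax)
      have htT : t ∈ T := hΩ₁T ht.1
      rw [abs_lt] at h1' h2' ⊢
      constructor
      · linarith [hfg t htT]
      · linarith [hgh t htT]
end

section
/- Let I be a B-admissible ideal on a time scale T satisfying the condition (BAP): for every countable family {A₁, A₂, …} of mutually disjoint sets in I there exists a countable family {B₁, B₂, …} of subsets of T such that each symmetric difference A_j Δ B_j is bounded and the union ⋃_j B_j belongs to I. Then every Δ-measurable function f : T → ℝ that is I-convergent to L is also I*-convergent to L. -/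
open MeasureTheory Filter Set Bornology

/-- The condition (BAP) for an ideal on a time scale. -/
def BAP (T : Set ℝ) (I : Set (Set ℝ)) : Prop :=
  ∀ A : ℕ → Set ℝ, (∀ j, A j ∈ I) → (Pairwise fun i j => Disjoint (A i) (A j)) →
    ∃ B : ℕ → Set ℝ, (∀ j, B j ⊆ T) ∧ (∀ j, IsBounded (symmDiff (A j) (B j))) ∧
      (⋃ j, B j) ∈ I

/-- For a `B`-admissible ideal satisfying (BAP), `I`-convergence implies
`I*`-convergence. -/
theorem IConv_imp_IStarConv (T : Set ℝ) (I : Set (Set ℝ))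
    (hTcl : IsClosed T) (hTne : T.Nonempty) (hinf : 0 < sInf T) (hub : ¬ BddAbove T)
    (hI : IdealOn T I) (hB : BAdmissible T I) (hBAP : BAP T I)
    (f : ℝ → ℝ) (hf : Measurable f) (L : ℝ)
    (h : IConv T I f L) : IStarConv T I f L := by
  classical
  set A : ℕ → Set ℝ := fun j =>
    {t | t ∈ T ∧ 1 / (j + 1 : ℝ) ≤ |f t - L| ∧ ∀ i < j, |f t - L| < 1 / (i + 1 : ℝ)} with hA
  have hAI : ∀ j, A j ∈ I := by
    intro j
    have hsub : A j ⊆ {t | t ∈ T ∧ 1 / (j + 1 : ℝ) ≤ |f t - L|} :=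
      fun t ht => ⟨ht.1, ht.2.1⟩
    exact hI.2.2.2 _ (h (1 / (j + 1 : ℝ)) (by positivity)) _ hsub
  have hAdisj : Pairwise fun i j => Disjoint (A i) (A j) := by
    intro i j hij
    rw [Set.disjoint_left]
    rintro t ⟨_, h1, h2⟩ ⟨_, h3, h4⟩
    rcases hij.lt_or_gt with hlt | hlt
    · exact absurd h1 (not_le.2 (h4 i hlt))
    · exact absurd h3 (not_le.2 (h2 j hlt))
  obtain ⟨B, hBT, hBbd, hBU⟩ := hBAP A hAI hAdisj
  refine ⟨T \ ⋃ j, B j, ⟨diff_subset, hI.2.2.2 _ hBU _ ?_⟩, ?_⟩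
  · intro t ht
    by_contra hc
    exact ht.2 ⟨ht.1, hc⟩
  · intro ε hε
    obtain ⟨k, hk⟩ := exists_nat_one_div_lt hε
    have hbd : IsBounded (⋃ j ∈ Finset.range (k + 1), symmDiff (A j) (B j)) := by
      exact (isBounded_biUnion (Finset.range (k + 1)).finite_toSet).2 fun j _ => hBbd j
    obtain ⟨c, hc⟩ := hbd.bddAbove
    obtain ⟨t', ht'T, hct'⟩ := not_bddAbove_iff.mp hub c
    refine ⟨t', ht'T, ?_⟩
    intro t ht htt'
    by_contra hcon
    push_neg at hcon
    have hex : ∃ j : ℕ, 1 / (j + 1 : ℝ) ≤ |f t - L| :=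
      ⟨k, le_trans hk.le hcon⟩
    set j := Nat.find hex with hj
    have hjk : j ≤ k := Nat.find_le (le_trans hk.le hcon)
    have htA : t ∈ A j :=
      ⟨ht.1, Nat.find_spec hex, fun i hi => not_le.1 (Nat.find_min hex hi)⟩
    have htB : t ∉ B j := fun hb => ht.2 (Set.mem_iUnion.2 ⟨j, hb⟩)
    have htS : t ∈ symmDiff (A j) (B j) := Set.mem_symmDiff.2 (Or.inl ⟨htA, htB⟩)
    have htU : t ∈ ⋃ i ∈ Finset.range (k + 1), symmDiff (A i) (B i) := by
      exact Set.mem_biUnion (Finset.mem_range.2 (Nat.lt_succ_of_le hjk)) htS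
    exact absurd (le_trans htt' (hc htU)) (not_le.2 hct')
end

section
/- Let I be a nontrivial ideal on a time scale T, and let f : T → ℝ be a Δ-measurable function that is I-Cauchy and has an I-cluster point L. Then f is I-convergent to L. -/
open MeasureTheory Filter Set Bornology

/-- An `I`-Cauchy function with an `I`-cluster point is `I`-convergent to it. -/
theorem ICauchy_with_cluster_point_IConv (T : Set ℝ) (I : Set (Set ℝ))
    (hI : IdealOn T I) (hnt : T ∉ I)
    (f : ℝ → ℝ) (hf : Measurable f) (L : ℝ)
    (hCauchy : ∀ ε : ℝ, 0 < ε → ∃ t₂ ∈ T, {t | t ∈ T ∧ ε ≤ |f t - f t₂|} ∈ I)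
    (hcluster : ∀ ε : ℝ, 0 < ε → {t | t ∈ T ∧ |f t - L| < ε} ∉ I) :
    IConv T I f L := by
  intro ε hε
  obtain ⟨t₂, ht₂T, hA⟩ := hCauchy (ε / 3) (by linarith)
  have hsub := hI.2.2.2 _ hA
  -- show |f t₂ - L| < 2ε/3
  have h2 : |f t₂ - L| < 2 * ε / 3 := by
    by_contra hc
    push_neg at hc
    apply hcluster (ε / 3) (by linarith)
    apply hsub
    intro t ht
    obtain ⟨htT, htL⟩ := ht
    refine ⟨htT, ?_⟩
    have h3 := abs_sub_le (f t₂) (f t) L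
    rw [abs_sub_comm (f t₂) (f t)] at h3
    linarith
  apply hsub
  intro t ht
  obtain ⟨htT, htL⟩ := ht
  refine ⟨htT, ?_⟩
  have h3 := abs_sub_le (f t) (f t₂) L
  linarith
end
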